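/- arXiv:1611.06032 — 3 statements merged into one kernel-verified Lean document; each statement's English description precedes it below -/
import Mathlib

section
/- Let $A_\Gamma$ be a right-angled Artin group with generators $g_1,\dots,g_m$ acting on a set $X$. Suppose there exist subsets $S_i \subseteq X$ for $1\le i\le m$, each with a partition $S_i = S_i^+ \sqcup S_i^-$, such that: (1) $g_i(S_i^+)\subseteq S_i^+$ and $g_i^{-1}(S_i^-)\subseteq S_i^-$ for all $i$; (2) if $g_i$ and $g_j$ commute in $A_\Gamma$ (i.e., $\{v_i,v_j\}$ is an edge of $\Gamma$) then $g_i(S_j)=S_j$; (3) if $g_i$ and $g_j$ do not commute, then $g_i(S_j)\subseteq S_i^+$ and $g_i^{-1}(S_j)\subseteq S_i^-$; (4) there exists $x\in X \setminus \bigcup_i S_i$ with $g_i(x)\in S_i^+$ and $g_i^{-1}(x)\in S_i^-$ for all $i$. Then the action of $A_\Gamma$ on $X$ is faithful. -/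
open Pointwise

/-- The defining relations of the right-angled Artin group of a simple graph. -/
def raagRels {V : Type*} (G : SimpleGraph V) : Set (FreeGroup V) :=
  {r | ∃ i j, G.Adj i j ∧
    r = FreeGroup.of i * FreeGroup.of j * (FreeGroup.of i)⁻¹ * (FreeGroup.of j)⁻¹}

/-- The right-angled Artin group of a simple graph. -/
abbrev RAAG {V : Type*} (G : SimpleGraph V) := PresentedGroup (raagRels G)

namespace RaagPingPong

attribute [local instance] Classical.propDecidable

variable {m : ℕ} (G : SimpleGraph (Fin m))

/-- the "state" of a word, processed right-to-left. -/
noncomputable def st : List (Fin m × Bool) → Option (Fin m × Option Bool)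
  | [] => none
  | (j,c) :: t => match st t with
    | none => some (j, some c)
    | some (k, _) => if G.Adj j k then some (k, none) else some (j, some c)

def Good : List (Fin m × Bool) → Prop
  | [] => True
  | (j,c) :: t => Good t ∧ ∀ h, st G t = some (j, h) → h = some c

@[simp] lemma st_nil : st G [] = none := rfl

lemma st_cons (j : Fin m) (c : Bool) (t : List (Fin m × Bool)) :
    st G ((j,c) :: t) = match st G t with
    | none => some (j, some c)
    | some (k, _) => if G.Adj j k then some (k, none) else some (j, some c) := by rw [st]

@[simp] lemma good_nil : Good G [] := trivial

lemma good_cons {j : Fin m} {c : Bool} {t : List (Fin m × Bool)} :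
    Good G ((j,c) :: t) ↔ Good G t ∧ ∀ h, st G t = some (j, h) → h = some c := Iff.rfl

lemma st_eq_none {t : List (Fin m × Bool)} (h : st G t = none) : t = [] := by
  cases t with
  | nil => rfl
  | cons a t =>
    obtain ⟨j, c⟩ := a
    rw [st_cons] at h
    rcases h' : st G t with _ | ⟨k, h2⟩ <;> rw [h'] at h
    · simp at h
    · by_cases hA : G.Adj j k <;> simp [hA] at h

lemma st_some_some {t : List (Fin m × Bool)} {k : Fin m} {d : Bool}
    (h : st G t = some (k, some d)) : ∃ t2, t = (k,d) :: t2 := by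
  cases t with
  | nil => simp at h
  | cons a t =>
    obtain ⟨j, c⟩ := a
    rw [st_cons] at h
    rcases h' : st G t with _ | ⟨k', h2⟩ <;> rw [h'] at h
    · simp_all
    · by_cases hA : G.Adj j k' <;> simp [hA] at h
      obtain ⟨rfl, rfl⟩ := h; exact ⟨t, rfl⟩

lemma st_some_none {t : List (Fin m × Bool)} {k : Fin m}
    (h : st G t = some (k, none)) :
    ∃ a d t2, t = (a,d) :: t2 ∧ G.Adj a k ∧ ∃ h2, st G t2 = some (k, h2) := by
  cases t with
  | nil => simp at h
  | cons a t =>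
    obtain ⟨j, c⟩ := a
    rw [st_cons] at h
    rcases h' : st G t with _ | ⟨k', h2⟩ <;> rw [h'] at h
    · simp at h
    · by_cases hA : G.Adj j k' <;> simp [hA] at h
      obtain ⟨rfl, _⟩ := h
      exact ⟨j, c, t, rfl, hA, h2, h'⟩

lemma st_cons_ne_none (j : Fin m) (c : Bool) (t : List (Fin m × Bool)) :
    st G ((j,c) :: t) ≠ none := by
  intro h
  exact List.cons_ne_nil _ _ (st_eq_none G h)

/-- word to group element -/
def mkw (l : List (Fin m × Bool)) : RAAG G := PresentedGroup.mk _ (FreeGroup.mk l)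

@[simp] lemma mkw_nil : mkw G [] = 1 := by
  show PresentedGroup.mk _ (FreeGroup.mk []) = 1
  rw [show (FreeGroup.mk [] : FreeGroup (Fin m)) = 1 from rfl, map_one]

lemma mkw_append (l1 l2 : List (Fin m × Bool)) :
    mkw G (l1 ++ l2) = mkw G l1 * mkw G l2 := by
  show PresentedGroup.mk _ (FreeGroup.mk (l1 ++ l2)) = _
  rw [← FreeGroup.mul_mk, map_mul]; rfl

lemma mkw_cons (j : Fin m) (c : Bool) (t : List (Fin m × Bool)) :
    mkw G ((j,c) :: t) = mkw G [(j,c)] * mkw G t := by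
  rw [← mkw_append]; rfl

lemma mkw_single_true (j : Fin m) :
    mkw G [(j, true)] = PresentedGroup.of j := rfl

lemma mkw_single_false (j : Fin m) :
    mkw G [(j, false)] = (PresentedGroup.of j : RAAG G)⁻¹ := by
  show PresentedGroup.mk _ (FreeGroup.mk [(j,false)]) = _
  have : (FreeGroup.mk [(j,false)] : FreeGroup (Fin m)) = (FreeGroup.of j)⁻¹ := by
    rw [show (FreeGroup.of j : FreeGroup (Fin m)) = FreeGroup.mk [(j,true)] from rfl,
      FreeGroup.inv_mk]
    rfl
  rw [this, map_inv]; rfl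

lemma mkw_single_cancel (j : Fin m) (c d : Bool) (hcd : d ≠ c) :
    mkw G [(j,c)] * mkw G [(j,d)] = 1 := by
  cases c <;> cases d <;> simp_all [mkw_single_true, mkw_single_false]

lemma of_commute {i j : Fin m} (h : G.Adj i j) :
    Commute (PresentedGroup.of i : RAAG G) (PresentedGroup.of j) := by
  have hrel : (FreeGroup.of i * FreeGroup.of j * (FreeGroup.of i)⁻¹ * (FreeGroup.of j)⁻¹ :
      FreeGroup (Fin m)) ∈ Subgroup.normalClosure (raagRels G) :=
    Subgroup.subset_normalClosure ⟨i, j, h, rfl⟩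
  have h1 : (PresentedGroup.mk (raagRels G))
      (FreeGroup.of i * FreeGroup.of j * (FreeGroup.of i)⁻¹ * (FreeGroup.of j)⁻¹) = 1 :=
    (QuotientGroup.eq_one_iff _).mpr hrel
  rw [map_mul, map_mul, map_mul, map_inv, map_inv] at h1
  have h2 := mul_inv_eq_one.mp h1
  exact mul_inv_eq_iff_eq_mul.mp h2

lemma mkw_single_commute {i j : Fin m} (h : G.Adj i j) (c d : Bool) :
    Commute (mkw G [(i,c)]) (mkw G [(j,d)]) := by
  have := of_commute G h
  cases c <;> cases d <;>
    simp only [mkw_single_true, mkw_single_false] <;>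
    first
      | exact this
      | exact this.inv_left
      | exact this.inv_right
      | exact this.inv_left.inv_right


lemma st_cons_some {t : List (Fin m × Bool)} {k : Fin m} {h : Option Bool}
    (hst : st G t = some (k, h)) (j : Fin m) (c : Bool) :
    st G ((j,c) :: t) = if G.Adj j k then some (k, none) else some (j, some c) := by
  rw [st_cons, hst]

lemma good_cons_of_ne {j : Fin m} {c : Bool} {t : List (Fin m × Bool)} {k : Fin m}
    {h : Option Bool} (hst : st G t = some (k, h)) (hjk : j ≠ k) (hgood : Good G t) :
    Good G ((j,c) :: t) := by
  refine ⟨hgood, fun h' hh' => ?_⟩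
  rw [hst] at hh'
  exact absurd (congrArg Prod.fst (Option.some.inj hh')) (Ne.symm hjk)

lemma gc : ∀ (n : ℕ) (t : List (Fin m × Bool)), t.length ≤ n → Good G t →
    ∀ (j : Fin m) (c : Bool),
    ∃ R, Good G R ∧ mkw G R = mkw G [(j,c)] * mkw G t ∧ R.length ≤ t.length + 1 ∧
      ((t.length ≤ R.length ∧ (st G t = none ∨ ∃ h0, st G t = some (j, h0))) →
        st G R = some (j, some c) ∨ st G R = some (j, none)) := by
  have base : ∀ (j : Fin m) (c : Bool),
      ∃ R, Good G R ∧ mkw G R = mkw G [(j,c)] * mkw G ([] : List (Fin m × Bool)) ∧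
        R.length ≤ ([] : List (Fin m × Bool)).length + 1 ∧
        ((([] : List (Fin m × Bool)).length ≤ R.length ∧
          (st G ([] : List (Fin m × Bool)) = none ∨
            ∃ h0, st G ([] : List (Fin m × Bool)) = some (j, h0))) →
          st G R = some (j, some c) ∨ st G R = some (j, none)) := by
    intro j c
    refine ⟨[(j,c)], ⟨good_nil G, by simp⟩, by simp, by simp, fun _ => Or.inl ?_⟩
    rw [st_cons, st_nil]
  intro n
  induction n with
  | zero =>
    intro t ht hgood j c
    obtain rfl : t = [] := List.length_eq_zero_iff.mp (Nat.le_zero.mp ht)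
    exact base j c
  | succ n ih =>
    intro t ht hgood j c
    rcases hst : st G t with _ | ⟨k, h⟩
    · obtain rfl := st_eq_none G hst
      exact base j c
    by_cases hA : G.Adj j k
    · -- branch B : prepend directly, state adjacent to j
      refine ⟨(j,c) :: t, good_cons_of_ne G hst hA.ne hgood, mkw_cons G j c t,
        by simp, fun hh => ?_⟩
      exfalso
      rcases hh.2 with h0 | ⟨h0, hh0⟩
      · exact (Option.some_ne_none _ h0).elim
      · exact hA.ne (congrArg Prod.fst (Option.some.inj hh0)).symm
    by_cases hjk : j = k
    · subst hjk
      cases h with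
      | some d =>
        by_cases hdc : d = c
        · -- branch D
          refine ⟨(j,c) :: t, ⟨hgood, fun h' hh' => ?_⟩, mkw_cons G j c t,
            by simp, fun _ => Or.inl ?_⟩
          · rw [hst] at hh'
            exact ((congrArg Prod.snd (Option.some.inj hh')).symm).trans (by rw [hdc])
          · rw [st_cons_some G hst, if_neg G.irrefl]
        · -- branch E : cancellation
          obtain ⟨t2, rfl⟩ := st_some_some G hst
          refine ⟨t2, hgood.1, ?_, by simp only [List.length_cons]; omega,
            fun hh => absurd hh.1 (by simp only [List.length_cons]; omega)⟩
          rw [mkw_cons G j d t2, ← mul_assoc, mkw_single_cancel G j c d hdc, one_mul]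
      | none =>
        -- branch F
        obtain ⟨a, d, t2, rfl, hAaj, h2, hst2⟩ := st_some_none G hst
        have hlt2 : t2.length ≤ n := by
          simp only [List.length_cons] at ht; omega
        obtain ⟨R2, hR2good, hR2mk, hR2len, hR2claim⟩ := ih t2 hlt2 hgood.1 j c
        have hcomm : mkw G [(j,c)] * mkw G [(a,d)] = mkw G [(a,d)] * mkw G [(j,c)] :=
          ((mkw_single_commute G hAaj d c).symm).eq
        have hmkt : mkw G ((a,d) :: t2) = mkw G [(a,d)] * mkw G t2 := mkw_cons G a d t2
        by_cases hlen : t2.length ≤ R2.length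
        · -- F1
          have hstR2 := hR2claim ⟨hlen, Or.inr ⟨h2, hst2⟩⟩
          have hane : a ≠ j := hAaj.ne
          have hgoodR : Good G ((a,d) :: R2) := by
            rcases hstR2 with h0 | h0
            · exact good_cons_of_ne G h0 hane hR2good
            · exact good_cons_of_ne G h0 hane hR2good
          refine ⟨(a,d) :: R2, hgoodR, ?_, ?_, fun _ => Or.inr ?_⟩
          · rw [mkw_cons G a d R2, hR2mk, ← mul_assoc, ← hcomm, mul_assoc, ← hmkt]
          · simp only [List.length_cons]; omega
          · rcases hstR2 with h0 | h0 <;> rw [st_cons_some G h0, if_pos hAaj]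
        · -- F2
          push_neg at hlen
          have hlR2 : R2.length ≤ n := by omega
          obtain ⟨R, hRgood, hRmk, hRlen, _⟩ := ih R2 hlR2 hR2good a d
          refine ⟨R, hRgood, ?_, ?_, fun hh => ?_⟩
          · rw [hRmk, hR2mk, ← mul_assoc, ← hcomm, mul_assoc, ← hmkt]
          · simp only [List.length_cons]; omega
          · exfalso
            have := hh.1
            simp only [List.length_cons] at this
            omega
    · -- branch C : j ≠ k, not adjacent
      refine ⟨(j,c) :: t, good_cons_of_ne G hst hjk hgood, mkw_cons G j c t,
        by simp, fun _ => Or.inl ?_⟩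
      rw [st_cons_some G hst, if_neg hA]

end RaagPingPong

/-- Ping-pong lemma for right-angled Artin groups: under conditions (1)–(4),
the action of `A_Γ` on `X` is faithful. -/
theorem raag_ping_pong {m : ℕ} (G : SimpleGraph (Fin m))
    (X : Type*) [MulAction (RAAG G) X]
    (g : Fin m → RAAG G) (hg : ∀ i, g i = PresentedGroup.of i)
    (S Sp Sm : Fin m → Set X)
    (hpart : ∀ i, S i = Sp i ∪ Sm i)
    (hdisj : ∀ i, Disjoint (Sp i) (Sm i))
    (h1 : ∀ i, g i • Sp i ⊆ Sp i ∧ (g i)⁻¹ • Sm i ⊆ Sm i)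
    (h2 : ∀ i j, G.Adj i j → g i • S j = S j)
    (h3 : ∀ i j, i ≠ j → ¬ G.Adj i j →
      g i • S j ⊆ Sp i ∧ (g i)⁻¹ • S j ⊆ Sm i)
    (h4 : ∃ x, x ∉ ⋃ i, S i ∧ ∀ i, g i • x ∈ Sp i ∧ (g i)⁻¹ • x ∈ Sm i) :
    ∀ w : RAAG G, (∀ x : X, w • x = x) → w = 1 := by
  open RaagPingPong in
  classical
  obtain ⟨x0, hx0, hx4⟩ := h4
  intro w hw
  -- singleton words
  have hsT : ∀ i : Fin m, mkw G [(i, true)] = g i := fun i => by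
    rw [mkw_single_true, hg]
  have hsF : ∀ i : Fin m, mkw G [(i, false)] = (g i)⁻¹ := fun i => by
    rw [mkw_single_false, hg]
  -- membership helpers
  have hSpS : ∀ k : Fin m, Sp k ⊆ S k := fun k => by rw [hpart]; exact Set.subset_union_left
  have hSmS : ∀ k : Fin m, Sm k ⊆ S k := fun k => by rw [hpart]; exact Set.subset_union_right
  have e1p : ∀ (i : Fin m) (y : X), y ∈ Sp i → g i • y ∈ Sp i :=
    fun i y hy => (h1 i).1 (Set.smul_mem_smul_set hy)
  have e1m : ∀ (i : Fin m) (y : X), y ∈ Sm i → (g i)⁻¹ • y ∈ Sm i :=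
    fun i y hy => (h1 i).2 (Set.smul_mem_smul_set hy)
  have e2p : ∀ (i k : Fin m) (y : X), G.Adj i k → y ∈ S k → g i • y ∈ S k :=
    fun i k y hA hy => by
      rw [← h2 i k hA]; exact Set.smul_mem_smul_set hy
  have e2m : ∀ (i k : Fin m) (y : X), G.Adj i k → y ∈ S k → (g i)⁻¹ • y ∈ S k :=
    fun i k y hA hy => by
      have hset : (g i)⁻¹ • S k = S k := by
        conv_lhs => rw [← h2 i k hA, inv_smul_smul]
      rw [← hset]; exact Set.smul_mem_smul_set hy
  have e3p : ∀ (i k : Fin m) (y : X), i ≠ k → ¬ G.Adj i k → y ∈ S k → g i • y ∈ Sp i :=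
    fun i k y hne hA hy => (h3 i k hne hA).1 (Set.smul_mem_smul_set hy)
  have e3m : ∀ (i k : Fin m) (y : X), i ≠ k → ¬ G.Adj i k → y ∈ S k → (g i)⁻¹ • y ∈ Sm i :=
    fun i k y hne hA hy => (h3 i k hne hA).2 (Set.smul_mem_smul_set hy)
  -- the ping-pong semantic lemma
  have sem : ∀ l : List (Fin m × Bool), Good G l → ∀ (k : Fin m) (h : Option Bool),
      st G l = some (k, h) →
      (mkw G l • x0 ∈ S k) ∧
      (h = some true → mkw G l • x0 ∈ Sp k) ∧
      (h = some false → mkw G l • x0 ∈ Sm k) := by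
    intro l
    induction l with
    | nil => intro _ k h hstl; rw [st_nil] at hstl; exact (Option.some_ne_none _ hstl.symm).elim
    | cons hd tl ih =>
      obtain ⟨j, c⟩ := hd
      intro hgood k h hstl
      have hmul : mkw G ((j,c) :: tl) • x0 = mkw G [(j,c)] • (mkw G tl • x0) := by
        rw [mkw_cons G j c tl, mul_smul]
      rcases hst0 : st G tl with _ | ⟨k', h'⟩
      · obtain rfl := st_eq_none G hst0
        rw [st_cons, st_nil] at hstl
        obtain ⟨hk, hh⟩ : k = j ∧ h = some c := by
          have := Option.some.inj hstl
          exact ⟨(congrArg Prod.fst this).symm, (congrArg Prod.snd this).symm⟩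
        rw [hk, hh, hmul, mkw_nil, one_smul]
        cases c
        · rw [hsF]
          exact ⟨hSmS j (hx4 j).2, fun hc => Bool.noConfusion (Option.some.inj hc),
            fun _ => (hx4 j).2⟩
        · rw [hsT]
          exact ⟨hSpS j (hx4 j).1, fun _ => (hx4 j).1,
            fun hc => Bool.noConfusion (Option.some.inj hc)⟩
      · have hmem := ih hgood.1 k' h' hst0
        rw [st_cons_some G hst0] at hstl
        by_cases hA : G.Adj j k'
        · rw [if_pos hA] at hstl
          obtain ⟨hk, hh⟩ : k = k' ∧ h = none := by
            have := Option.some.inj hstl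
            exact ⟨(congrArg Prod.fst this).symm, (congrArg Prod.snd this).symm⟩
          rw [hk, hh, hmul]
          refine ⟨?_, fun hc => (Option.some_ne_none _ hc.symm).elim, fun hc => (Option.some_ne_none _ hc.symm).elim⟩
          cases c
          · rw [hsF]; exact e2m j k' _ hA hmem.1
          · rw [hsT]; exact e2p j k' _ hA hmem.1
        · rw [if_neg hA] at hstl
          obtain ⟨hk, hh⟩ : k = j ∧ h = some c := by
            have := Option.some.inj hstl
            exact ⟨(congrArg Prod.fst this).symm, (congrArg Prod.snd this).symm⟩
          rw [hk, hh, hmul]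
          by_cases hjk : j = k'
          · subst hjk
            have hc' : h' = some c := hgood.2 h' hst0
            subst hc'
            cases c
            · rw [hsF]
              have : mkw G tl • x0 ∈ Sm j := hmem.2.2 rfl
              exact ⟨hSmS j (e1m j _ this), fun hc => Bool.noConfusion (Option.some.inj hc),
                fun _ => e1m j _ this⟩
            · rw [hsT]
              have : mkw G tl • x0 ∈ Sp j := hmem.2.1 rfl
              exact ⟨hSpS j (e1p j _ this), fun _ => e1p j _ this,
                fun hc => Bool.noConfusion (Option.some.inj hc)⟩
          · cases c
            · rw [hsF]
              exact ⟨hSmS j (e3m j k' _ hjk hA hmem.1),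
                fun hc => Bool.noConfusion (Option.some.inj hc),
                fun _ => e3m j k' _ hjk hA hmem.1⟩
            · rw [hsT]
              exact ⟨hSpS j (e3p j k' _ hjk hA hmem.1),
                fun _ => e3p j k' _ hjk hA hmem.1,
                fun hc => Bool.noConfusion (Option.some.inj hc)⟩
  -- normalization
  have norm : ∀ l : List (Fin m × Bool), ∃ R, Good G R ∧ mkw G R = mkw G l := by
    intro l
    induction l with
    | nil => exact ⟨[], good_nil G, rfl⟩
    | cons hd tl ih =>
      obtain ⟨j, c⟩ := hd
      obtain ⟨Rt, hRtg, hRtmk⟩ := ih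
      obtain ⟨R, hRg, hRmk, -, -⟩ := gc G Rt.length Rt le_rfl hRtg j c
      exact ⟨R, hRg, by rw [hRmk, hRtmk, ← mkw_cons]⟩
  -- assemble
  obtain ⟨f, rfl⟩ := PresentedGroup.mk_surjective (raagRels G) w
  have hwrep : PresentedGroup.mk (raagRels G) f = mkw G f.toWord := by
    unfold RaagPingPong.mkw
    rw [FreeGroup.mk_toWord]
  obtain ⟨R, hRg, hRmk⟩ := norm f.toWord
  rcases hstR : st G R with _ | ⟨k, h⟩
  · obtain rfl := st_eq_none G hstR
    rw [hwrep, ← hRmk, mkw_nil]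
  · exfalso
    have hmem := (sem R hRg k h hstR).1
    rw [hRmk, ← hwrep, hw x0] at hmem
    exact hx0 (Set.mem_iUnion.mpr ⟨k, hmem⟩)
end

section
/- Let $\Gamma$ be a finite simple graph with vertex set $\{v_1,\dots,v_m\}$, and suppose there exist nonempty subsets $D_1,\dots,D_m$ of $\{1,\dots,n\}$ such that for all $i \neq j$, $D_i \cap D_j = \emptyset$ if and only if $\{v_i,v_j\}$ is an edge of $\Gamma$. Then there exist pairwise relations on an abstract 'slice' structure realizing the graph: concretely, there exist subsets $S_1,\dots,S_m \subseteq [0,1)^n$, each a $D_i$-slice, with $S_i \cap S_j = \emptyset$ iff $v_i, v_j$ are non-adjacent for $i\neq j$, and with $\bigcup_i S_i \subsetneq [0,1)^n$. -/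
/-- `S` is a dyadic `D`-slice of `[0,1)^n`. -/
def IsDyadicSlice (n : ℕ) (D : Set (Fin n)) (S : Set (Fin n → ℝ)) : Prop :=
  ∃ I : Fin n → Set ℝ,
    (∀ d, ∃ k p : ℕ, p + 1 ≤ 2 ^ k ∧
      I d = Set.Ico ((p : ℝ) / 2 ^ k) (((p : ℝ) + 1) / 2 ^ k)) ∧
    (∀ d, I d ⊂ Set.Ico (0 : ℝ) 1 ↔ d ∈ D) ∧
    S = Set.univ.pi I

/-- If nonempty subsets `D i` of `{1,…,n}` realize the (non-)adjacency of a graph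
`Γ` via disjointness, then there are `D i`-slices of `[0,1)^n` which are disjoint
exactly for non-adjacent pairs of vertices, with union a proper subset of the cube. -/
theorem exists_slices_of_graph {m n : ℕ} (G : SimpleGraph (Fin m))
    (D : Fin m → Set (Fin n)) (hD : ∀ i, (D i).Nonempty)
    (hadj : ∀ i j, i ≠ j → (D i ∩ D j = ∅ ↔ G.Adj i j)) :
    ∃ S : Fin m → Set (Fin n → ℝ),
      (∀ i, IsDyadicSlice n (D i) (S i)) ∧
      (∀ i j, i ≠ j → (S i ∩ S j = ∅ ↔ ¬ G.Adj i j)) ∧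
      (⋃ i, S i) ⊂ Set.univ.pi (fun _ : Fin n => Set.Ico (0 : ℝ) 1) := by
  classical
  have hc : (0:ℝ) < 2 ^ m := by positivity
  have hm : (m:ℝ) < 2 ^ m := by exact_mod_cast (Nat.lt_two_pow_self (n := m))
  set I : Fin m → Fin n → Set ℝ := fun i d =>
    if d ∈ D i then Set.Ico (((i:ℕ):ℝ) / 2 ^ m) ((((i:ℕ):ℝ) + 1) / 2 ^ m)
    else Set.Ico 0 1 with hI
  have hi1 : ∀ i : Fin m, ((i:ℕ):ℝ) + 1 ≤ (m:ℝ) := by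
    intro i; exact_mod_cast i.is_lt
  have hIsub : ∀ i d, I i d ⊆ Set.Ico (0:ℝ) 1 := by
    intro i d
    by_cases h : d ∈ D i
    · simp only [hI, if_pos h]
      apply Set.Ico_subset_Ico
      · positivity
      · rw [div_le_one hc]; linarith [hi1 i]
    · simp [hI, if_neg h]
  have hmemIco : ∀ i : Fin m, ((i:ℕ):ℝ) / 2 ^ m ∈ Set.Ico (0:ℝ) 1 := by
    intro i
    refine ⟨by positivity, ?_⟩
    rw [div_lt_one hc]; linarith [hi1 i]
  have hImem : ∀ i d, ((i:ℕ):ℝ) / 2 ^ m ∈ I i d := by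
    intro i d
    by_cases h : d ∈ D i
    · simp only [hI, if_pos h, Set.mem_Ico]
      refine ⟨le_rfl, ?_⟩
      have h1 : ((i:ℕ):ℝ) < ((i:ℕ):ℝ) + 1 := by linarith
      gcongr
    · simpa [hI, if_neg h] using hmemIco i
  refine ⟨fun i => Set.univ.pi (I i), ?_, ?_, ?_⟩
  · intro i
    refine ⟨I i, ?_, ?_, rfl⟩
    · intro d
      by_cases h : d ∈ D i
      · refine ⟨m, (i:ℕ), ?_, by simp [hI, if_pos h]⟩
        have := i.is_lt
        have := Nat.lt_two_pow_self (n := m)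
        omega
      · exact ⟨0, 0, le_rfl, by simp [hI, if_neg h]⟩
    · intro d
      by_cases h : d ∈ D i
      · simp only [h, iff_true]
        refine ⟨hIsub i d, ?_⟩
        intro hsub
        have hx : ((((i:ℕ):ℝ) + 1) / 2 ^ m) ∈ Set.Ico (0:ℝ) 1 := by
          refine ⟨by positivity, ?_⟩
          rw [div_lt_one hc]; linarith [hi1 i]
        have := hsub hx
        simp only [hI, if_pos h, Set.mem_Ico] at this
        exact absurd this.2 (lt_irrefl _)
      · simp only [h, iff_false, hI, if_neg h]
        exact fun hss => absurd rfl (Set.ssubset_iff_subset_ne.mp hss).2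
  · intro i j hij
    rw [← hadj i j hij]
    have key : ∀ i j : Fin m, i ≠ j → D i ∩ D j = ∅ → (Set.univ.pi (I i) ∩ Set.univ.pi (I j)).Nonempty := by
      intro i j hij hDij
      refine ⟨fun d => if d ∈ D i then ((i:ℕ):ℝ) / 2 ^ m else ((j:ℕ):ℝ) / 2 ^ m, ?_, ?_⟩
      · intro d _
        by_cases h : d ∈ D i
        · simpa [if_pos h] using hImem i d
        · simp only [if_neg h, hI]
          exact hmemIco j
      · intro d _
        by_cases h : d ∈ D i
        · have hdj : d ∉ D j := fun hdj =>
            Set.eq_empty_iff_forall_notMem.mp hDij d ⟨h, hdj⟩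
          simp only [if_pos h, hI, if_neg hdj]
          exact hmemIco i
        · simpa [if_neg h] using hImem j d
    constructor
    · intro hS
      by_contra hDij
      exact Set.not_nonempty_empty (hS ▸ key i j hij hDij)
    · intro hDij
      ext x
      simp only [Set.mem_inter_iff, Set.mem_empty_iff_false, iff_false, not_and]
      intro hxi hxj
      obtain ⟨d0, hd0i, hd0j⟩ := Set.nonempty_iff_ne_empty.mpr hDij
      have h1 := hxi d0 (Set.mem_univ _)
      have h2 := hxj d0 (Set.mem_univ _)
      simp only [hI, if_pos hd0i] at h1
      simp only [hI, if_pos hd0j] at h2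
      obtain ⟨h1a, h1b⟩ := h1
      obtain ⟨h2a, h2b⟩ := h2
      have hijn : (i:ℕ) ≠ (j:ℕ) := fun h => hij (Fin.ext h)
      rcases lt_or_gt_of_ne hijn with hlt | hlt
      · have : ((i:ℕ):ℝ) + 1 ≤ ((j:ℕ):ℝ) := by exact_mod_cast hlt
        have : (((i:ℕ):ℝ) + 1) / 2 ^ m ≤ ((j:ℕ):ℝ) / 2 ^ m := by gcongr
        linarith
      · have : ((j:ℕ):ℝ) + 1 ≤ ((i:ℕ):ℝ) := by exact_mod_cast hlt
        have : (((j:ℕ):ℝ) + 1) / 2 ^ m ≤ ((i:ℕ):ℝ) / 2 ^ m := by gcongr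
        linarith
  · rw [Set.ssubset_iff_subset_ne]
    constructor
    · exact Set.iUnion_subset fun i x hx d _ => hIsub i d (hx d (Set.mem_univ d))
    · intro heq
      have hx : (fun _ : Fin n => (m:ℝ) / 2 ^ m) ∈ Set.univ.pi (fun _ : Fin n => Set.Ico (0:ℝ) 1) := by
        intro d _
        refine ⟨by positivity, ?_⟩
        rw [div_lt_one hc]; exact hm
      rw [← heq] at hx
      obtain ⟨_, ⟨i, rfl⟩, hxi⟩ := hx
      obtain ⟨d0, hd0⟩ := hD i
      have := hxi d0 (Set.mem_univ _)
      simp only [hI, if_pos hd0, Set.mem_Ico] at this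
      have hle : (((i:ℕ):ℝ) + 1) / 2 ^ m ≤ (m:ℝ) / 2 ^ m := by
        gcongr; exact hi1 i
      linarith [this.2]
end

section
/- Let $w = g_{i_1}^{\epsilon_1} \cdots g_{i_k}^{\epsilon_k}$ (with $\epsilon_j = \pm 1$) be a nonempty reduced word representing a nontrivial element of a right-angled Artin group $A_\Gamma$ acting on a set $X$, under the ping-pong hypotheses (1)-(4) of the RAAG ping-pong lemma. Then $w \cdot x \in \bigcup_{i=1}^m S_i$ for the point $x$ from hypothesis (4); in particular $w \cdot x \neq x$. -/
open Pointwise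

/-- The element of `A_Γ` represented by a word in the generators and their
inverses (`true` encoding a generator, `false` its inverse). -/
def wordElem {m : ℕ} (G : SimpleGraph (Fin m)) (w : List (Fin m × Bool)) : RAAG G :=
  (w.map fun p =>
    if p.2 then PresentedGroup.of (rels := raagRels G) p.1
    else (PresentedGroup.of (rels := raagRels G) p.1)⁻¹).prod

section Aux

variable {m : ℕ} (G : SimpleGraph (Fin m))

/-- The element of the RAAG corresponding to a single letter. -/
def letterE (p : Fin m × Bool) : RAAG G :=
  if p.2 then PresentedGroup.of (rels := raagRels G) p.1
  else (PresentedGroup.of (rels := raagRels G) p.1)⁻¹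

lemma wordElem_nil : wordElem G [] = 1 := by simp [wordElem]

lemma wordElem_cons (p : Fin m × Bool) (l : List (Fin m × Bool)) :
    wordElem G (p :: l) = letterE G p * wordElem G l := by
  simp [wordElem, letterE]

lemma of_commute {i j : Fin m} (h : G.Adj i j) :
    Commute (PresentedGroup.of (rels := raagRels G) i)
      (PresentedGroup.of (rels := raagRels G) j) := by
  rw [← commutatorElement_eq_one_iff_commute]
  have hrel : (FreeGroup.of i * FreeGroup.of j * (FreeGroup.of i)⁻¹ * (FreeGroup.of j)⁻¹)
      ∈ raagRels G := ⟨i, j, h, rfl⟩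
  have : PresentedGroup.mk (raagRels G)
      (FreeGroup.of i * FreeGroup.of j * (FreeGroup.of i)⁻¹ * (FreeGroup.of j)⁻¹) = 1 := by
    exact (QuotientGroup.eq_one_iff _).2 (Subgroup.subset_normalClosure hrel)
  simpa [commutatorElement_def, map_mul, map_inv, PresentedGroup.of] using this

lemma letterE_commute {i j : Fin m} (h : G.Adj i j) (a b : Bool) :
    letterE G (i, a) * letterE G (j, b) = letterE G (j, b) * letterE G (i, a) := by
  have hc := of_commute G h
  cases a <;> cases b <;> simp [letterE] <;>
    [exact hc.inv_inv.eq; exact (hc.inv_left).eq; exact (hc.inv_right).eq; exact hc.eq]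

lemma letterE_cancel (k : Fin m) (s : Bool) :
    letterE G (k, s) * letterE G (k, !s) = 1 := by
  cases s <;> simp [letterE]

/-- `w` is reduced: minimal length among words representing the same element. -/
def RedW (w : List (Fin m × Bool)) : Prop :=
  ∀ v, wordElem G v = wordElem G w → w.length ≤ v.length

/-- An element `e` (with given word length `n`) has a frontable letter `(k,s)`. -/
def FrL (e : RAAG G) (n : ℕ) (k : Fin m) (s : Bool) : Prop :=
  ∃ u : List (Fin m × Bool), e = wordElem G ((k, s) :: u) ∧ n = u.length + 1

/-- Right-to-left ping-pong scan of a word tracking which set the point is in.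
`Scan G w c s b`: the point `w • x` is in `S c`; if `b` is `true`, it is even
in the `s`-half of `S c`. -/
inductive Scan : List (Fin m × Bool) → Fin m → Bool → Bool → Prop
  | single (k : Fin m) (s : Bool) : Scan [(k, s)] k s true
  | same {l k s} : Scan l k s true → Scan ((k, s) :: l) k s true
  | adj {l k s b} (i : Fin m) (ε : Bool) : G.Adj i k → Scan l k s b →
      Scan ((i, ε) :: l) k s false
  | far {l k s b} (i : Fin m) (ε : Bool) : i ≠ k → ¬ G.Adj i k → Scan l k s b →
      Scan ((i, ε) :: l) i ε true

lemma scan_fr {w : List (Fin m × Bool)} {c : Fin m} {s b : Bool}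
    (h : Scan G w c s b) : ∃ s', FrL G (wordElem G w) w.length c s' := by
  induction h with
  | single k s => exact ⟨s, [], rfl, rfl⟩
  | same _ _ => exact ⟨_, _, rfl, rfl⟩
  | far i ε _ _ _ _ => exact ⟨ε, _, rfl, rfl⟩
  | @adj l k s b i ε hadj _ ih =>
    obtain ⟨s', u, hu, hlen⟩ := ih
    refine ⟨s', (i, ε) :: u, ?_, by simp [hlen]⟩
    rw [wordElem_cons, hu, wordElem_cons, wordElem_cons, wordElem_cons,
      ← mul_assoc, ← mul_assoc, letterE_commute G hadj]

lemma scan_ne_nil {w : List (Fin m × Bool)} {c : Fin m} {s b : Bool}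
    (h : Scan G w c s b) : w ≠ [] := by
  cases h <;> simp

/-- The key combinatorial lemma: every reduced nonempty word can be rearranged
(preserving its group element and length) into a word whose scan succeeds, and
moreover such that the final index either avoids `i` or is a known frontable
`i`-letter. -/
lemma key : ∀ n (w : List (Fin m × Bool)), w.length ≤ n → RedW G w → w ≠ [] →
    ∀ i : Fin m, ∃ (v : List (Fin m × Bool)) (c : Fin m) (s b : Bool),
      wordElem G v = wordElem G w ∧ v.length = w.length ∧ Scan G v c s b ∧
      (c ≠ i ∨ (b = true ∧ c = i ∧ FrL G (wordElem G w) w.length i s)) := by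
  intro n
  induction n with
  | zero =>
    intro w hlen _ hne i
    interval_cases h : w.length
    · exact absurd (List.length_eq_zero_iff.1 h) hne
  | succ n ih =>
    intro w hlen hred hne i
    obtain ⟨a, l, rfl⟩ : ∃ a l, w = a :: l := by
      cases w with
      | nil => exact absurd rfl hne
      | cons a l => exact ⟨a, l, rfl⟩
    obtain ⟨a1, a2⟩ := a
    by_cases hl : l = []
    · subst hl
      refine ⟨[(a1, a2)], a1, a2, true, rfl, rfl, Scan.single a1 a2, ?_⟩
      by_cases h : a1 = i
      · exact Or.inr ⟨rfl, h, by subst h; exact ⟨[], rfl, rfl⟩⟩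
      · exact Or.inl h
    · -- main case: length ≥ 2
      have hlp : 0 < l.length := List.length_pos_iff.2 hl
      simp only [List.length_cons] at hlen
      -- build: from any frontable letter (k, η), produce a successful scan
      have build : ∀ (k : Fin m) (η : Bool),
          FrL G (wordElem G ((a1, a2) :: l)) ((a1, a2) :: l).length k η →
          ∃ (v : List (Fin m × Bool)) (c : Fin m) (s b : Bool),
            wordElem G v = wordElem G ((a1, a2) :: l) ∧
            v.length = ((a1, a2) :: l).length ∧ Scan G v c s b ∧
            (∃ s'', FrL G (wordElem G ((a1, a2) :: l)) ((a1, a2) :: l).length c s'') ∧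
            ((c = k ∧ s = η ∧ b = true) ∨ (b = false ∧ G.Adj k c)) := by
        intro k η hfr
        obtain ⟨u, hu, hulen⟩ := hfr
        simp only [List.length_cons] at hulen
        have hune : u ≠ [] := by
          intro h; subst h; simp only [List.length_nil] at hulen; omega
        have hured : RedW G u := by
          intro vv hvv
          have : wordElem G ((k, η) :: vv) = wordElem G ((a1, a2) :: l) := by
            rw [wordElem_cons, hvv, ← wordElem_cons, ← hu]
          have := hred _ this
          simp only [List.length_cons] at this
          omega
        have hulen' : u.length ≤ n := by omega
        obtain ⟨v', c', s', b', hv'e, hv'len, hscan', hdisj'⟩ :=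
          ih u hulen' hured hune k
        by_cases hck : c' = k
        · rcases hdisj' with h | ⟨hb', -, hfrk⟩
          · exact absurd hck h
          have hscanK : Scan G v' k s' true := by
            rw [hck, hb'] at hscan'; exact hscan'
          by_cases hs : s' = η
          · refine ⟨(k, s') :: v', k, s', true, ?_,
              (by simp only [List.length_cons, hv'len]; omega),
              Scan.same hscanK, ⟨η, u, hu, by simp only [List.length_cons]; omega⟩,
              Or.inl ⟨rfl, hs, rfl⟩⟩
            rw [wordElem_cons, hv'e, hs, ← wordElem_cons, ← hu]
          · -- cancellation contradicts reducedness
            exfalso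
            obtain ⟨u₂, hu₂, hu₂len⟩ := hfrk
            have hs' : s' = !η := by cases s' <;> cases η <;> simp_all
            have : wordElem G u₂ = wordElem G ((a1, a2) :: l) := by
              rw [hu, wordElem_cons, hu₂, wordElem_cons, ← mul_assoc]
              rw [hs', letterE_cancel, one_mul]
            have := hred _ this
            simp only [List.length_cons] at this
            omega
        · by_cases hadj : G.Adj k c'
          · refine ⟨(k, η) :: v', c', s', false, ?_,
              (by simp only [List.length_cons, hv'len]; omega),
              Scan.adj k η hadj hscan', ?_, Or.inr ⟨rfl, hadj⟩⟩
            · rw [wordElem_cons, hv'e, ← wordElem_cons, ← hu]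
            · -- c' is frontable in w, by commuting past (k, η)
              obtain ⟨s'', u₃, hu₃, hu₃len⟩ := scan_fr G hscan'
              rw [hv'e] at hu₃
              rw [hv'len] at hu₃len
              refine ⟨s'', (k, η) :: u₃, ?_, by simp only [List.length_cons]; omega⟩
              rw [hu, wordElem_cons, hu₃, wordElem_cons, ← mul_assoc,
                letterE_commute G hadj, wordElem_cons, wordElem_cons, mul_assoc]
          · refine ⟨(k, η) :: v', k, η, true, ?_,
              (by simp only [List.length_cons, hv'len]; omega),
              Scan.far k η (fun h => hck h.symm) hadj hscan',
              ⟨η, u, hu, by simp only [List.length_cons]; omega⟩,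
              Or.inl ⟨rfl, rfl, rfl⟩⟩
            rw [wordElem_cons, hv'e, ← wordElem_cons, ← hu]
      by_cases hB : ∃ s, FrL G (wordElem G ((a1, a2) :: l)) ((a1, a2) :: l).length i s
      · obtain ⟨sB, hfrB⟩ := hB
        obtain ⟨v, c, s, b, hve, hvl, hscan, _, hcase⟩ := build i sB hfrB
        rcases hcase with ⟨hc, hs, hb⟩ | ⟨hb, hadj⟩
        · exact ⟨v, c, s, b, hve, hvl, hscan, Or.inr ⟨hb, hc, hs ▸ hc ▸ hfrB⟩⟩
        · exact ⟨v, c, s, b, hve, hvl, hscan, Or.inl (fun h => G.irrefl (h ▸ hadj))⟩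
      · have hfrA : FrL G (wordElem G ((a1, a2) :: l)) ((a1, a2) :: l).length a1 a2 :=
          ⟨l, rfl, rfl⟩
        obtain ⟨v, c, s, b, hve, hvl, hscan, ⟨s'', hfrc⟩, _⟩ := build a1 a2 hfrA
        refine ⟨v, c, s, b, hve, hvl, hscan, Or.inl ?_⟩
        intro h
        exact hB ⟨s'', h ▸ hfrc⟩

end Aux

/-- Under the ping-pong hypotheses, every nonempty reduced word `w`
(i.e. a word of minimal length among all words representing the same element
of `A_Γ`) moves the basepoint `x` into `⋃ i, S i`; in particular `w • x ≠ x`. -/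
theorem reduced_word_moves_basepoint {m : ℕ} (G : SimpleGraph (Fin m))
    (X : Type*) [MulAction (RAAG G) X]
    (g : Fin m → RAAG G) (hg : ∀ i, g i = PresentedGroup.of i)
    (S Sp Sm : Fin m → Set X)
    (hpart : ∀ i, S i = Sp i ∪ Sm i)
    (hdisj : ∀ i, Disjoint (Sp i) (Sm i))
    (h1 : ∀ i, g i • Sp i ⊆ Sp i ∧ (g i)⁻¹ • Sm i ⊆ Sm i)
    (h2 : ∀ i j, G.Adj i j → g i • S j = S j)
    (h3 : ∀ i j, i ≠ j → ¬ G.Adj i j →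
      g i • S j ⊆ Sp i ∧ (g i)⁻¹ • S j ⊆ Sm i)
    (x : X) (hx : x ∉ ⋃ i, S i)
    (hx' : ∀ i, g i • x ∈ Sp i ∧ (g i)⁻¹ • x ∈ Sm i)
    (w : List (Fin m × Bool)) (hw : w ≠ [])
    (hred : ∀ w' : List (Fin m × Bool),
      wordElem G w' = wordElem G w → w.length ≤ w'.length) :
    wordElem G w • x ∈ (⋃ i, S i) ∧ wordElem G w • x ≠ x := by
  -- elementwise versions of the hypotheses, in terms of `letterE`
  have hgl : ∀ (k : Fin m) (s : Bool),
      letterE G (k, s) = if s then g k else (g k)⁻¹ := by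
    intro k s; cases s <;> simp [letterE, hg]
  have H1 : ∀ (k : Fin m) (s : Bool) (y : X),
      y ∈ (if s then Sp k else Sm k) → letterE G (k, s) • y ∈ (if s then Sp k else Sm k) := by
    intro k s y hy
    cases s
    · simpa [hgl] using (h1 k).2 (Set.smul_mem_smul_set (by simpa using hy))
    · simpa [hgl] using (h1 k).1 (Set.smul_mem_smul_set (by simpa using hy))
  have H2 : ∀ (i j : Fin m), G.Adj i j → ∀ (ε : Bool) (y : X),
      y ∈ S j → letterE G (i, ε) • y ∈ S j := by
    intro i j hadj ε y hy
    cases ε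
    · rw [← h2 i j hadj] at hy
      obtain ⟨z, hz, rfl⟩ := hy
      simpa [hgl, inv_smul_smul] using hz
    · simpa [hgl] using (h2 i j hadj) ▸ Set.smul_mem_smul_set hy
  have H3 : ∀ (i j : Fin m), i ≠ j → ¬ G.Adj i j → ∀ (ε : Bool) (y : X),
      y ∈ S j → letterE G (i, ε) • y ∈ (if ε then Sp i else Sm i) := by
    intro i j hne hnadj ε y hy
    cases ε
    · simpa [hgl] using (h3 i j hne hnadj).2 (Set.smul_mem_smul_set hy)
    · simpa [hgl] using (h3 i j hne hnadj).1 (Set.smul_mem_smul_set hy)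
  have HX : ∀ (k : Fin m) (s : Bool),
      letterE G (k, s) • x ∈ (if s then Sp k else Sm k) := by
    intro k s
    cases s
    · simpa [hgl] using (hx' k).2
    · simpa [hgl] using (hx' k).1
  have hsub : ∀ (c : Fin m) (s b : Bool) (y : X),
      y ∈ (if b then (if s then Sp c else Sm c) else S c) → y ∈ S c := by
    intro c s b y hy
    cases b
    · simpa using hy
    · rw [hpart c]
      cases s
      · exact Or.inr (by simpa using hy)
      · exact Or.inl (by simpa using hy)
  -- semantic lemma for scans
  have sem : ∀ {v : List (Fin m × Bool)} {c : Fin m} {s b : Bool}, Scan G v c s b →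
      wordElem G v • x ∈ (if b then (if s then Sp c else Sm c) else S c) := by
    intro v c s b h
    induction h with
    | single k s =>
      simpa [wordElem_cons, wordElem_nil] using HX k s
    | @same l k s hscan ihh =>
      rw [wordElem_cons, mul_smul]
      exact H1 k s _ ihh
    | @adj l k s b i ε hadj hscan ihh =>
      rw [wordElem_cons, mul_smul]
      simpa using H2 i k hadj ε _ (hsub k s b _ ihh)
    | @far l k s b i ε hne hnadj hscan ihh =>
      rw [wordElem_cons, mul_smul]
      exact H3 i k hne hnadj ε _ (hsub k s b _ ihh)
  obtain ⟨a, l, rfl⟩ : ∃ a l, w = a :: l := by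
    cases w with
    | nil => exact absurd rfl hw
    | cons a l => exact ⟨a, l, rfl⟩
  obtain ⟨v, c, s, b, hve, hvl, hscan, _⟩ :=
    key G (a :: l).length (a :: l) le_rfl hred hw a.1
  have hmem : wordElem G (a :: l) • x ∈ S c := by
    rw [← hve]
    exact hsub c s b _ (sem hscan)
  constructor
  · exact Set.mem_iUnion.2 ⟨c, hmem⟩
  · intro h
    exact hx (Set.mem_iUnion.2 ⟨c, h ▸ hmem⟩)
end
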